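/- arXiv:2604.13124 — 8 statements merged into one kernel-verified Lean document; each statement's English description precedes it below -/
import Mathlib

section
/- Let α, β be real numbers with 1 < α < β, and set a = (α−1)/α (the nontrivial fixed point of f_α) and b = (β−1)/β (the nontrivial fixed point of f_β). Then the two conditions f_β(a) = b and f_α(b) = a hold (each being equivalent to the other) if and only if α = β/(β−1). This is the necessary and sufficient condition (C2) for a 2-point toss-and-catch of the logistic IFS {f_α, f_β}. -/
/-- The logistic map `f_γ(x) = γ·x·(1−x)`. -/
def logistic (γ x : ℝ) : ℝ := γ * x * (1 - x)

/-- Condition (C2) for a 2-point toss-and-catch of the logistic IFS `{f_α, f_β}`: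
for `1 < α < β`, with `a = (α−1)/α` and `b = (β−1)/β` the nontrivial fixed points,
the conditions `f_β(a) = b` and `f_α(b) = a` are equivalent to each other, and they
hold if and only if `α = β/(β−1)`. -/
theorem logistic_IFS_two_point_toss_and_catch_condition (α β : ℝ)
    (hα : 1 < α) (hαβ : α < β)
    (a b : ℝ) (ha : a = (α - 1) / α) (hb : b = (β - 1) / β) :
    (logistic β a = b ↔ logistic α b = a) ∧
    ((logistic β a = b ∧ logistic α b = a) ↔ α = β / (β - 1)) := by
  have hα0 : α ≠ 0 := by linarith
  have hβ0 : β ≠ 0 := by linarith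
  have hβ1 : β - 1 ≠ 0 := by nlinarith
  subst ha hb
  have h1 : logistic β ((α - 1) / α) = (β - 1) / β ↔ β^2 * (α - 1) = α^2 * (β - 1) := by
    unfold logistic
    constructor
    · intro h
      field_simp at h
      nlinarith [h]
    · intro h
      field_simp
      nlinarith [h]
  have h2 : logistic α ((β - 1) / β) = (α - 1) / α ↔ β^2 * (α - 1) = α^2 * (β - 1) := by
    unfold logistic
    constructor
    · intro h
      field_simp at h
      nlinarith [h]
    · intro h
      field_simp
      nlinarith [h]
  have h3 : (β^2 * (α - 1) = α^2 * (β - 1)) ↔ α = β / (β - 1) := by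
    rw [eq_div_iff hβ1]
    constructor
    · intro h
      have hfac : (β - α) * (α * β - α - β) = 0 := by ring_nf; nlinarith [h]
      rcases mul_eq_zero.mp hfac with h' | h'
      · linarith
      · nlinarith [h']
    · intro h
      nlinarith [h]
  refine ⟨h1.trans h2.symm, ?_⟩
  rw [h1, h2, and_self, h3]
end

section
/- Let α, β be real numbers with α > 1 and β > 3, and set p₋ = (β+1−√((β+1)(β−3)))/(2β) and p₊ = (β+1+√((β+1)(β−3)))/(2β). Assume the conditions (C3a) p₋ = (α−1)/α, (C3b) f_β(1/α) = p₊, and (C3c) f_α(p₊) = 1/α. Then the three-point set Λ = {(α−1)/α, 1/α, p₊} is an invariant set of the IFS {f_α, f_β}: f_α(Λ) ∪ f_β(Λ) = Λ. Specifically, f_α fixes (α−1)/α, f_α(1/α) = (α−1)/α, f_α(p₊) = 1/α, f_β((α−1)/α) = p₊, f_β(1/α) = p₊, and f_β(p₊) = (α−1)/α. -/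
theorem logistic_sub_one_div_self {γ : ℝ} (hγ : γ ≠ 0) :
    logistic γ ((γ - 1) / γ) = (γ - 1) / γ := by
  unfold logistic
  field_simp
  ring

theorem logistic_one_div_self {γ : ℝ} (hγ : γ ≠ 0) : logistic γ (1 / γ) = (γ - 1) / γ := by
  unfold logistic
  field_simp

/-- Either choice of the square root `s` works, so this gives both `f_β(p₋) = p₊` and
`f_β(p₊) = p₋`. -/
theorem logistic_periodTwo_of_sq_eq {β s : ℝ} (hβ : β ≠ 0) (hs : s ^ 2 = (β + 1) * (β - 3)) :
    logistic β ((β + 1 - s) / (2 * β)) = (β + 1 + s) / (2 * β) := by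
  unfold logistic
  field_simp
  linear_combination -hs

/-- Under conditions (C3a)–(C3c), the three-point set `Λ = {(α−1)/α, 1/α, p₊}` is an
invariant set of the logistic IFS `{f_α, f_β}`, with the indicated transitions. -/
theorem logistic_IFS_three_point_invariant_set (α β : ℝ)
    (hα : α > 1) (hβ : β > 3)
    (pm pp : ℝ)
    (hpm : pm = (β + 1 - Real.sqrt ((β + 1) * (β - 3))) / (2 * β))
    (hpp : pp = (β + 1 + Real.sqrt ((β + 1) * (β - 3))) / (2 * β))
    (hC3a : pm = (α - 1) / α)
    (hC3b : logistic β (1 / α) = pp)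
    (hC3c : logistic α pp = 1 / α) :
    (logistic α '' ({(α - 1) / α, 1 / α, pp} : Set ℝ) ∪
      logistic β '' ({(α - 1) / α, 1 / α, pp} : Set ℝ)
        = ({(α - 1) / α, 1 / α, pp} : Set ℝ)) ∧
    logistic α ((α - 1) / α) = (α - 1) / α ∧
    logistic α (1 / α) = (α - 1) / α ∧
    logistic α pp = 1 / α ∧
    logistic β ((α - 1) / α) = pp ∧
    logistic β (1 / α) = pp ∧
    logistic β pp = (α - 1) / α := by
  have hα0 : α ≠ 0 := by positivity
  have hβ0 : β ≠ 0 := by positivity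
  have hsqrt : √((β + 1) * (β - 3)) ^ 2 = (β + 1) * (β - 3) := Real.sq_sqrt (by nlinarith)
  have hfix := logistic_sub_one_div_self hα0
  have hinv := logistic_one_div_self hα0
  have hpm_pp : logistic β pm = pp := by
    rw [hpm, hpp]
    exact logistic_periodTwo_of_sq_eq hβ0 hsqrt
  have hpp_pm : logistic β pp = pm := by
    rw [hpm, hpp]
    simpa [sub_eq_add_neg] using logistic_periodTwo_of_sq_eq hβ0 (s := -√((β + 1) * (β - 3)))
      (by rwa [neg_sq])
  rw [hC3a] at hpm_pp hpp_pm
  refine ⟨?_, hfix, hinv, hC3c, hpm_pp, hC3b, hpp_pm⟩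
  simp only [Set.image_insert_eq, Set.image_singleton, hfix, hinv, hC3c, hpm_pp, hC3b, hpp_pm]
  ext x
  simp only [Set.mem_union, Set.mem_insert_iff, Set.mem_singleton_iff]
  tauto
end

section
/- Let α, β be real numbers with 2 < α < 3 and 3 < β < 4, and set p₋ = (β+1−√((β+1)(β−3)))/(2β) and p₊ = (β+1+√((β+1)(β−3)))/(2β). If the conditions (C3a) p₋ = (α−1)/α, (C3b) f_β(1/α) = p₊, and (C3c) f_α(p₊) = 1/α all hold, then α satisfies the cubic equation α³ − 3α² + 2α − 1 = 0 and β satisfies the cubic equation β³ − 2β² − 3β − 1 = 0. -/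
/-- If `2 < α < 3`, `3 < β < 4`, and conditions (C3a)–(C3c) hold, then
`α³ − 3α² + 2α − 1 = 0` and `β³ − 2β² − 3β − 1 = 0`. -/
theorem logistic_IFS_three_point_cubics (α β : ℝ)
    (hα1 : 2 < α) (hα2 : α < 3) (hβ1 : 3 < β) (hβ2 : β < 4)
    (pm pp : ℝ)
    (hpm : pm = (β + 1 - Real.sqrt ((β + 1) * (β - 3))) / (2 * β))
    (hpp : pp = (β + 1 + Real.sqrt ((β + 1) * (β - 3))) / (2 * β))
    (hC3a : pm = (α - 1) / α)
    (hC3b : logistic β (1 / α) = pp)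
    (hC3c : logistic α pp = 1 / α) :
    α ^ 3 - 3 * α ^ 2 + 2 * α - 1 = 0 ∧
    β ^ 3 - 2 * β ^ 2 - 3 * β - 1 = 0 := by
  set s := Real.sqrt ((β + 1) * (β - 3)) with hsdef
  have hα0 : α ≠ 0 := by positivity
  have hβ0 : β ≠ 0 := by positivity
  have hs : s ^ 2 = (β + 1) * (β - 3) :=
    Real.sq_sqrt (by nlinarith)
  rw [hpm] at hC3a
  rw [hpp] at hC3b hC3c
  unfold logistic at hC3b hC3c
  field_simp at hC3a hC3b hC3c
  have e1 : α * (β + 1 - s) = 2 * β * (α - 1) := by linear_combination hC3a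
  have e2 : 2 * β ^ 2 * (α - 1) = α ^ 2 * (β + 1 + s) := by linear_combination hC3b
  have eqC : α ^ 2 * (β + 1 - s) = 2 * β ^ 2 := by
    linear_combination hC3c / 2 + (α ^ 2 / 2) * hs
  have eqD : β ^ 2 = α * (β + 1) := by
    have h2 : (2 * α) * β ^ 2 = (2 * α) * (α * (β + 1)) := by linear_combination e2 - eqC
    exact mul_left_cancel₀ (by positivity) h2
  have eqA : α ^ 2 + α * β + β ^ 2 = α * β ^ 2 := by
    linear_combination (α * e1 - e2) / 2
  have eqE : α * β = 2 * β + 1 := by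
    have h2 : α * (α * β) = α * (2 * β + 1) := by
      linear_combination -(1:ℝ) * eqA + (1 - α) * eqD
    exact mul_left_cancel₀ hα0 h2
  constructor
  · linear_combination (-(α - 2) ^ 2) * eqD + (α * β - 2 * β + 1 - α ^ 2 + 2 * α) * eqE
  · linear_combination β * eqD + (β + 1) * eqE
end

section
/- Let α, β be real numbers with 2 < α < 3, α ≠ 2, and 3 < β < 4, and set p₋ = (β+1−√((β+1)(β−3)))/(2β) and p₊ = (β+1+√((β+1)(β−3)))/(2β). Assume (C3a) p₋ = (α−1)/α, (C3b) f_β(1/α) = p₊, and (C3c) f_α(p₊) = 1/α. Then the bridging point B = 1/α is a periodic point of neither f_α nor f_β: for every integer n ≥ 1, the n-th iterate of f_α at 1/α differs from 1/α, and the n-th iterate of f_β at 1/α differs from 1/α. -/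
/-!
Under `f_α`, the point `1/α` is sent to the fixed point `(α - 1)/α`; under `f_β` it is sent to
`p₊`, which lies on the 2-cycle `{p₋, p₊}` of `f_β`. In both cases the forward orbit of
`f(1/α)` stays in an invariant set avoiding `1/α` (here (C3c) rules out `p₊ = 1/α`, since
`f_α(1/α) ≠ 1/α`), so the orbit of `1/α` never returns.
-/

open Function Set

theorem not_isPeriodicPt_of_mapsTo {X : Type*} {f : X → X} {s : Set X} {x : X} {n : ℕ}
    (hs : MapsTo f s s) (hfx : f x ∈ s) (hx : x ∉ s) (hn : n ≠ 0) :
    ¬ IsPeriodicPt f n x := by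
  obtain ⟨m, rfl⟩ := Nat.exists_eq_succ_of_ne_zero hn
  intro hper
  apply hx
  rw [← hper.eq, iterate_succ_apply]
  exact hs.iterate m hfx

section Logistic

variable {γ : ℝ}

theorem logistic_one_div (hγ : γ ≠ 0) : logistic γ (1 / γ) = (γ - 1) / γ := by
  unfold logistic
  field_simp

theorem logistic_sub_one_div (hγ : γ ≠ 0) : logistic γ ((γ - 1) / γ) = (γ - 1) / γ := by
  unfold logistic
  field_simp
  ring

theorem sub_one_div_ne_one_div (hγ : γ ≠ 0) (hγ2 : γ ≠ 2) : (γ - 1) / γ ≠ 1 / γ := by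
  rw [Ne, div_left_inj' hγ]
  contrapose! hγ2
  linarith

/-- Applied to `s` and `-s`, this shows that `(γ + 1 ∓ s) / (2γ)` form a 2-cycle of `f_γ`. -/
theorem logistic_two_cycle {s : ℝ} (hγ : γ ≠ 0) (hs : s ^ 2 = (γ + 1) * (γ - 3)) :
    logistic γ ((γ + 1 - s) / (2 * γ)) = (γ + 1 + s) / (2 * γ) := by
  unfold logistic
  field_simp
  linear_combination -hs

end Logistic

theorem logistic_IFS_three_point_bridging_point_not_periodic_general (α β : ℝ)
    (hα1 : 2 < α) (hα3 : α ≠ 2) (hβ1 : 3 < β)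
    (pm pp : ℝ)
    (hpm : pm = (β + 1 - Real.sqrt ((β + 1) * (β - 3))) / (2 * β))
    (hpp : pp = (β + 1 + Real.sqrt ((β + 1) * (β - 3))) / (2 * β))
    (hC3a : pm = (α - 1) / α)
    (hC3b : logistic β (1 / α) = pp)
    (hC3c : logistic α pp = 1 / α) :
    ∀ n : ℕ, 1 ≤ n →
      (logistic α)^[n] (1 / α) ≠ 1 / α ∧ (logistic β)^[n] (1 / α) ≠ 1 / α := by
  intro n hn
  have hα0 : α ≠ 0 := by positivity
  have hβ0 : β ≠ 0 := by positivity
  have hfixed_ne := sub_one_div_ne_one_div hα0 hα3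
  set s := Real.sqrt ((β + 1) * (β - 3))
  have hs : s ^ 2 = (β + 1) * (β - 3) := Real.sq_sqrt (by nlinarith)
  have hpm_pp : logistic β pm = pp := hpm ▸ hpp ▸ logistic_two_cycle hβ0 hs
  have hpp_pm : logistic β pp = pm := by
    have := logistic_two_cycle hβ0 (s := -s) (by rw [neg_sq, hs])
    rwa [sub_neg_eq_add, ← sub_eq_add_neg, ← hpp, ← hpm] at this
  have hpp_ne : pp ≠ 1 / α := by
    rintro rfl
    exact hfixed_ne (logistic_one_div hα0 ▸ hC3c)
  refine ⟨not_isPeriodicPt_of_mapsTo (s := {(α - 1) / α}) ?_ ?_ ?_ (by omega),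
    not_isPeriodicPt_of_mapsTo (s := {pm, pp}) ?_ ?_ ?_ (by omega)⟩
  · exact mapsTo_singleton.mpr (logistic_sub_one_div hα0)
  · exact logistic_one_div hα0
  · exact hfixed_ne.symm
  · rintro _ (rfl | rfl)
    exacts [.inr hpm_pp, .inl hpp_pm]
  · exact hC3b ▸ .inr rfl
  · rintro (h | h)
    exacts [hfixed_ne (hC3a ▸ h).symm, hpp_ne h.symm]

/-- Under conditions (C3a)–(C3c) with `2 < α < 3`, `α ≠ 2`, `3 < β < 4`, the bridging
point `B = 1/α` is a periodic point of neither `f_α` nor `f_β`: for every `n ≥ 1`,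
`f_α^[n](1/α) ≠ 1/α` and `f_β^[n](1/α) ≠ 1/α`. -/
theorem logistic_IFS_three_point_bridging_point_not_periodic (α β : ℝ)
    (hα1 : 2 < α) (hα2 : α < 3) (hα3 : α ≠ 2) (hβ1 : 3 < β) (hβ2 : β < 4)
    (pm pp : ℝ)
    (hpm : pm = (β + 1 - Real.sqrt ((β + 1) * (β - 3))) / (2 * β))
    (hpp : pp = (β + 1 + Real.sqrt ((β + 1) * (β - 3))) / (2 * β))
    (hC3a : pm = (α - 1) / α)
    (hC3b : logistic β (1 / α) = pp)
    (hC3c : logistic α pp = 1 / α) :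
    ∀ n : ℕ, 1 ≤ n →
      (logistic α)^[n] (1 / α) ≠ 1 / α ∧ (logistic β)^[n] (1 / α) ≠ 1 / α :=
  logistic_IFS_three_point_bridging_point_not_periodic_general α β hα1 hα3 hβ1 pm pp hpm hpp hC3a
    hC3b hC3c
end

section
/- Let α, β be real numbers with 2 < α < 3 and 3 < β < 4, and set p₋ = (β+1−√((β+1)(β−3)))/(2β) and p₊ = (β+1+√((β+1)(β−3)))/(2β). Assume the conditions (C5a) f_β((α−1)/α) = p₊, (C5b) f_α(p₋) = (α−1)/α, (C5c) f_α((β−1)/β) = p₋, (C5d) f_α(1/β) = p₋, and (C5e) f_α(p₊) = 1/β, and assume that the five points (α−1)/α, (β−1)/β, 1/β, p₋, p₊ are pairwise distinct. Then the bridging point B = 1/β is a periodic point of neither f_α nor f_β: for every integer n ≥ 1, the n-th iterate of f_α at 1/β differs from 1/β, and the n-th iterate of f_β at 1/β differs from 1/β. -/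
/-!
Under `f_β` the point `1/β` lands at once on the fixed point `(β−1)/β`, and under `f_α`
it reaches the fixed point `(α−1)/α` in two steps, `1/β ↦ p₋ ↦ (α−1)/α` by (C5d) and (C5b).
A periodic point whose orbit meets a fixed point is that fixed point, and `1/β` differs
from both fixed points.
-/

namespace Function

theorem IsPeriodicPt.eq_of_iterate_eq_isFixedPt {α : Type*} {f : α → α} {x y : α} {n m : ℕ}
    (hx : IsPeriodicPt f n x) (hn : 0 < n) (hxy : f^[m] x = y) (hy : IsFixedPt f y) :
    x = y := by
  obtain ⟨k, rfl⟩ := Nat.exists_eq_add_one_of_ne_zero hn.ne'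
  calc x = f^[(k + 1) * m] x := ((hx.mul_const m).eq).symm
    _ = f^[k * m] (f^[m] x) := by rw [add_one_mul, iterate_add_apply]
    _ = y := by rw [hxy, (hy.iterate _).eq]

end Function

theorem logistic_isFixedPt {γ : ℝ} (hγ : γ ≠ 0) :
    Function.IsFixedPt (logistic γ) ((γ - 1) / γ) := by
  unfold Function.IsFixedPt logistic
  field_simp
  ring

theorem logistic_IFS_five_point_bridging_point_not_periodic_general (α β : ℝ)
    (hα1 : 2 < α) (hβ1 : 3 < β)
    (pm pp : ℝ)
    (hC5b : logistic α pm = (α - 1) / α)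
    (hC5d : logistic α (1 / β) = pm)
    (hdist : List.Pairwise (· ≠ ·)
      [(α - 1) / α, (β - 1) / β, 1 / β, pm, pp]) :
    ∀ n : ℕ, 1 ≤ n →
      (logistic α)^[n] (1 / β) ≠ 1 / β ∧ (logistic β)^[n] (1 / β) ≠ 1 / β := by
  obtain _ | ⟨hfixα_ne, _ | ⟨hfixβ_ne, -⟩⟩ := hdist
  have hα : α ≠ 0 := by linarith
  have hβ : β ≠ 0 := by linarith
  have hα_two : (logistic α)^[2] (1 / β) = (α - 1) / α := by
    rw [Function.iterate_succ_apply', Function.iterate_one, hC5d, hC5b]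
  have hβ_one : (logistic β)^[1] (1 / β) = (β - 1) / β := logistic_one_div_self hβ
  intro n hn
  constructor
  · intro h
    exact hfixα_ne (1 / β) (by simp)
      (Function.IsPeriodicPt.eq_of_iterate_eq_isFixedPt h hn hα_two (logistic_isFixedPt hα)).symm
  · intro h
    exact hfixβ_ne (1 / β) (by simp)
      (Function.IsPeriodicPt.eq_of_iterate_eq_isFixedPt h hn hβ_one (logistic_isFixedPt hβ)).symm

/-- Under conditions (C5a)–(C5e) with `2 < α < 3`, `3 < β < 4`, and the five points
`(α−1)/α, (β−1)/β, 1/β, p₋, p₊` pairwise distinct, the bridging point `B = 1/β` is a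
periodic point of neither `f_α` nor `f_β`: for every `n ≥ 1`,
`f_α^[n](1/β) ≠ 1/β` and `f_β^[n](1/β) ≠ 1/β`. -/
theorem logistic_IFS_five_point_bridging_point_not_periodic (α β : ℝ)
    (hα1 : 2 < α) (hα2 : α < 3) (hβ1 : 3 < β) (hβ2 : β < 4)
    (pm pp : ℝ)
    (hpm : pm = (β + 1 - Real.sqrt ((β + 1) * (β - 3))) / (2 * β))
    (hpp : pp = (β + 1 + Real.sqrt ((β + 1) * (β - 3))) / (2 * β))
    (hC5a : logistic β ((α - 1) / α) = pp)
    (hC5b : logistic α pm = (α - 1) / α)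
    (hC5c : logistic α ((β - 1) / β) = pm)
    (hC5d : logistic α (1 / β) = pm)
    (hC5e : logistic α pp = 1 / β)
    (hdist : List.Pairwise (· ≠ ·)
      [(α - 1) / α, (β - 1) / β, 1 / β, pm, pp]) :
    ∀ n : ℕ, 1 ≤ n →
      (logistic α)^[n] (1 / β) ≠ 1 / β ∧ (logistic β)^[n] (1 / β) ≠ 1 / β :=
  logistic_IFS_five_point_bridging_point_not_periodic_general α β hα1 hβ1 pm pp hC5b hC5d hdist
end

section
/- Let μ, γ be real numbers with 1 < μ ≤ 2 and 1 < γ < 2, and set a = 1 − 1/γ (the nontrivial fixed point of f_γ) and b = μ/(1+μ) (the nontrivial fixed point of T_μ). Then the two conditions T_μ(a) = b and f_γ(b) = a hold if and only if γ = (1+μ)/μ. In particular, when γ = (1+μ)/μ the two-element set {1/(1+μ), μ/(1+μ)} is an invariant set of the IFS {f_γ, T_μ}: f_γ(Λ) ∪ T_μ(Λ) = Λ. This is condition (C′2) for a 2-point toss-and-catch of the logistic-tent IFS. -/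
/-- The tent map `T_μ(x) = μ·x` for `x < 1/2` and `T_μ(x) = μ·(1−x)` for `x ≥ 1/2`. -/
noncomputable def tent (μ x : ℝ) : ℝ := if x < 1 / 2 then μ * x else μ * (1 - x)

/-!
With `p = 1/(1+μ)` and `q = μ/(1+μ) = 1 - p`, the condition `γ = (1+μ)/μ` says exactly that `p`
is the nontrivial fixed point `1 - 1/γ` of `f_γ`. Since `f_γ` is symmetric about `1/2`, it sends
both `p` and `q` to `p`; and since `p < 1/2 ≤ q`, the tent map sends both to its fixed point `q`.
-/

theorem logistic_one_sub (γ x : ℝ) : logistic γ (1 - x) = logistic γ x := by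
  unfold logistic; ring

theorem logistic_one_sub_one_div {γ : ℝ} (hγ : γ ≠ 0) :
    logistic γ (1 - 1 / γ) = 1 - 1 / γ := by
  unfold logistic; field_simp; ring

theorem tent_of_lt_half (μ : ℝ) {x : ℝ} (hx : x < 1 / 2) : tent μ x = μ * x :=
  if_pos hx

theorem tent_of_half_le (μ : ℝ) {x : ℝ} (hx : 1 / 2 ≤ x) : tent μ x = μ * (1 - x) :=
  if_neg hx.not_gt

theorem one_sub_one_div_lt_half {γ : ℝ} (h0 : 0 < γ) (h2 : γ < 2) : 1 - 1 / γ < 1 / 2 := by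
  have : 1 / 2 < 1 / γ := one_div_lt_one_div_of_lt h0 h2
  linarith

theorem one_div_one_add_lt_half {μ : ℝ} (hμ : 1 < μ) : 1 / (1 + μ) < 1 / 2 :=
  one_div_lt_one_div_of_lt two_pos (by linarith)

theorem div_one_add_eq_one_sub {μ : ℝ} (hμ : 1 + μ ≠ 0) : μ / (1 + μ) = 1 - 1 / (1 + μ) := by
  field_simp; ring

theorem one_sub_one_div_eq_one_div_one_add_iff {μ γ : ℝ} (hμ : 0 < μ) :
    1 - 1 / γ = 1 / (1 + μ) ↔ γ = (1 + μ) / μ := by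
  rw [sub_eq_iff_eq_add, ← sub_eq_iff_eq_add', ← div_one_add_eq_one_sub (by positivity),
    one_div, eq_comm, inv_eq_iff_eq_inv, inv_div]

theorem tent_one_div_one_add {μ : ℝ} (hμ : 1 < μ) : tent μ (1 / (1 + μ)) = μ / (1 + μ) := by
  rw [tent_of_lt_half μ (one_div_one_add_lt_half hμ), mul_one_div]

theorem tent_div_one_add {μ : ℝ} (hμ : 1 ≤ μ) : tent μ (μ / (1 + μ)) = μ / (1 + μ) := by
  have h1μ : 0 < 1 + μ := by linarith
  have hhalf : 1 / 2 ≤ μ / (1 + μ) := by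
    rw [div_le_div_iff₀ two_pos h1μ]; linarith
  rw [tent_of_half_le μ hhalf]
  field_simp; ring

theorem image_pair_union_image_pair {α : Type*} {f g : α → α} {p q : α}
    (hfp : f p = p) (hfq : f q = p) (hgp : g p = q) (hgq : g q = q) :
    f '' {p, q} ∪ g '' {p, q} = {p, q} := by
  rw [Set.image_pair, Set.image_pair, hfp, hfq, hgp, hgq, Set.pair_eq_singleton,
    Set.pair_eq_singleton, Set.singleton_union]

theorem logistic_tent_IFS_two_point_toss_and_catch_general (μ γ : ℝ)
    (hμ1 : 1 < μ) (hγ1 : 1 < γ) (hγ2 : γ < 2)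
    (a b : ℝ) (ha : a = 1 - 1 / γ) (hb : b = μ / (1 + μ)) :
    ((tent μ a = b ∧ logistic γ b = a) ↔ γ = (1 + μ) / μ) ∧
    (γ = (1 + μ) / μ →
      logistic γ '' ({1 / (1 + μ), μ / (1 + μ)} : Set ℝ) ∪
        tent μ '' ({1 / (1 + μ), μ / (1 + μ)} : Set ℝ)
          = ({1 / (1 + μ), μ / (1 + μ)} : Set ℝ)) := by
  have hμ : 0 < μ := by linarith
  have hγ : γ ≠ 0 := by positivity
  have hq : μ / (1 + μ) = 1 - 1 / (1 + μ) := div_one_add_eq_one_sub (by positivity)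
  have hfix := one_sub_one_div_eq_one_div_one_add_iff (γ := γ) hμ
  have hta : tent μ a = μ * a := tent_of_lt_half μ (ha ▸ one_sub_one_div_lt_half (by linarith) hγ2)
  have hlogistic (h : γ = (1 + μ) / μ) : logistic γ (1 / (1 + μ)) = 1 / (1 + μ) := by
    rw [← hfix.2 h, logistic_one_sub_one_div hγ]
  refine ⟨⟨fun ⟨hab, _⟩ => hfix.1 ?_, fun h => ⟨?_, ?_⟩⟩, fun h => ?_⟩
  · rw [← ha]
    refine mul_left_cancel₀ hμ.ne' ?_
    rw [← hta, hab, hb, mul_one_div]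
  · rw [hta, ha, hfix.2 h, hb, mul_one_div]
  · rw [hb, hq, logistic_one_sub, hlogistic h, ha, hfix.2 h]
  · exact image_pair_union_image_pair (hlogistic h) (by rw [hq, logistic_one_sub, hlogistic h])
      (tent_one_div_one_add hμ1) (tent_div_one_add hμ1.le)

/-- Condition (C′2) for a 2-point toss-and-catch of the logistic-tent IFS:
for `1 < μ ≤ 2` and `1 < γ < 2`, with `a = 1 − 1/γ` and `b = μ/(1+μ)`, the conditions
`T_μ(a) = b` and `f_γ(b) = a` hold iff `γ = (1+μ)/μ`; and when `γ = (1+μ)/μ` the set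
`Λ = {1/(1+μ), μ/(1+μ)}` is an invariant set of the IFS `{f_γ, T_μ}`. -/
theorem logistic_tent_IFS_two_point_toss_and_catch (μ γ : ℝ)
    (hμ1 : 1 < μ) (hμ2 : μ ≤ 2) (hγ1 : 1 < γ) (hγ2 : γ < 2)
    (a b : ℝ) (ha : a = 1 - 1 / γ) (hb : b = μ / (1 + μ)) :
    ((tent μ a = b ∧ logistic γ b = a) ↔ γ = (1 + μ) / μ) ∧
    (γ = (1 + μ) / μ →
      logistic γ '' ({1 / (1 + μ), μ / (1 + μ)} : Set ℝ) ∪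
        tent μ '' ({1 / (1 + μ), μ / (1 + μ)} : Set ℝ)
          = ({1 / (1 + μ), μ / (1 + μ)} : Set ℝ)) :=
  logistic_tent_IFS_two_point_toss_and_catch_general μ γ hμ1 hγ1 hγ2 a b ha hb
end

section
/- Let μ be a real number with 1 < μ ≤ 2 and set γ = (1+μ²)/μ. Define a = μ/(1+μ²), b = μ²/(1+μ²), and c = (1+μ²−μ)/(1+μ²). Then c = 1 − 1/γ is the nontrivial fixed point of f_γ, and the following hold: f_γ(a) = c, f_γ(b) = a, f_γ(c) = c, T_μ(a) = b, T_μ(b) = a, and T_μ(c) = b. Consequently the three-point set Λ = {a, b, c} is an invariant set of the IFS {f_γ, T_μ}: f_γ(Λ) ∪ T_μ(Λ) = Λ. This is the 3-point toss-and-catch of the logistic-tent IFS arising under condition (C′3): γ = (1+μ²)/μ. -/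
theorem tent_of_le_half (μ : ℝ) {x : ℝ} (hx : x ≤ 1 / 2) : tent μ x = μ * x := by
  rcases hx.lt_or_eq with hlt | rfl
  · exact if_pos hlt
  · rw [tent, if_neg (lt_irrefl _)]
    ring

theorem Set.image_union_image_triple_eq {α : Type*} {f g : α → α} {a b c : α}
    (hfa : f a = c) (hfb : f b = a) (hfc : f c = c)
    (hga : g a = b) (hgb : g b = a) (hgc : g c = b) :
    f '' {a, b, c} ∪ g '' {a, b, c} = {a, b, c} := by
  ext x
  simp only [Set.image_insert_eq, Set.image_singleton, Set.mem_union, Set.mem_insert_iff,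
    Set.mem_singleton_iff, hfa, hfb, hfc, hga, hgb, hgc]
  tauto

theorem logistic_tent_transitions {μ γ a b c : ℝ} (hγa : γ * a = 1) (hba : b = μ * a)
    (hab : a = μ * (1 - b)) (hca : c = 1 - a) (ha : a ≤ 1 / 2) (hb : 1 / 2 ≤ b) :
    logistic γ a = c ∧ logistic γ b = a ∧ logistic γ c = c ∧
    tent μ a = b ∧ tent μ b = a ∧ tent μ c = b := by
  have hc : 1 / 2 ≤ c := by linarith
  refine ⟨?_, ?_, ?_, ?_, ?_, ?_⟩
  · rw [logistic, hγa, hca, one_mul]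
  · calc logistic γ b = γ * a * μ * (1 - b) := by rw [logistic, hba]; ring
      _ = a := by rw [hγa, one_mul, ← hab]
  · calc logistic γ c = γ * a * c := by rw [logistic, hca, sub_sub_cancel]; ring
      _ = c := by rw [hγa, one_mul]
  · rw [tent_of_le_half μ ha, hba]
  · rw [tent_of_half_le μ hb, hab]
  · rw [tent_of_half_le μ hc, hca, sub_sub_cancel, hba]

theorem logistic_tent_IFS_three_point_toss_and_catch_general (μ γ : ℝ)
    (hμ1 : 1 < μ) (hγ : γ = (1 + μ ^ 2) / μ)
    (a b c : ℝ)
    (ha : a = μ / (1 + μ ^ 2)) (hb : b = μ ^ 2 / (1 + μ ^ 2))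
    (hc : c = (1 + μ ^ 2 - μ) / (1 + μ ^ 2)) :
    c = 1 - 1 / γ ∧
    logistic γ a = c ∧ logistic γ b = a ∧ logistic γ c = c ∧
    tent μ a = b ∧ tent μ b = a ∧ tent μ c = b ∧
    (logistic γ '' ({a, b, c} : Set ℝ) ∪ tent μ '' ({a, b, c} : Set ℝ)
      = ({a, b, c} : Set ℝ)) := by
  have hμ : μ ≠ 0 := by positivity
  have hD : 0 < 1 + μ ^ 2 := by positivity
  have hγa : γ * a = 1 := by rw [hγ, ha]; field_simp
  have hba : b = μ * a := by rw [hb, ha]; ring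
  have hab : a = μ * (1 - b) := by rw [ha, hb]; field_simp; ring
  have hca : c = 1 - a := by rw [hc, ha]; field_simp
  have ha_le : a ≤ 1 / 2 := by
    rw [ha, div_le_iff₀ hD]; nlinarith [sq_nonneg (μ - 1)]
  have hb_ge : 1 / 2 ≤ b := by
    rw [hb, le_div_iff₀ hD]; nlinarith
  obtain ⟨hla, hlb, hlc, hta, htb, htc⟩ :=
    logistic_tent_transitions hγa hba hab hca ha_le hb_ge
  refine ⟨?_, hla, hlb, hlc, hta, htb, htc,
    Set.image_union_image_triple_eq hla hlb hlc hta htb htc⟩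
  rw [hca, ← eq_one_div_of_mul_eq_one_right hγa]

/-- The 3-point toss-and-catch of the logistic-tent IFS under condition (C′3):
for `1 < μ ≤ 2` and `γ = (1+μ²)/μ`, with `a = μ/(1+μ²)`, `b = μ²/(1+μ²)`,
`c = (1+μ²−μ)/(1+μ²)`, we have `c = 1 − 1/γ`, the transitions
`f_γ(a) = c`, `f_γ(b) = a`, `f_γ(c) = c`, `T_μ(a) = b`, `T_μ(b) = a`, `T_μ(c) = b`,
and `Λ = {a, b, c}` is an invariant set of the IFS `{f_γ, T_μ}`. -/
theorem logistic_tent_IFS_three_point_toss_and_catch (μ γ : ℝ)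
    (hμ1 : 1 < μ) (hμ2 : μ ≤ 2) (hγ : γ = (1 + μ ^ 2) / μ)
    (a b c : ℝ)
    (ha : a = μ / (1 + μ ^ 2)) (hb : b = μ ^ 2 / (1 + μ ^ 2))
    (hc : c = (1 + μ ^ 2 - μ) / (1 + μ ^ 2)) :
    c = 1 - 1 / γ ∧
    logistic γ a = c ∧ logistic γ b = a ∧ logistic γ c = c ∧
    tent μ a = b ∧ tent μ b = a ∧ tent μ c = b ∧
    (logistic γ '' ({a, b, c} : Set ℝ) ∪ tent μ '' ({a, b, c} : Set ℝ)
      = ({a, b, c} : Set ℝ)) :=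
  logistic_tent_IFS_three_point_toss_and_catch_general μ γ hμ1 hγ a b c ha hb hc
end

section
/- Let μ be a real number with 1 < μ ≤ 2 and set γ = (1+μ²)/μ, a = μ/(1+μ²), b = μ²/(1+μ²), and c = (1+μ²−μ)/(1+μ²). Then every point of the invariant set Λ = {a, b, c} of the logistic-tent IFS {f_γ, T_μ} is a periodic point of f_γ or of T_μ: c is a fixed point of f_γ (f_γ(c) = c), while a and b are period-2 points of T_μ (T_μ(T_μ(a)) = a and T_μ(T_μ(b)) = b with T_μ(a) ≠ a and T_μ(b) ≠ b). Hence, in contrast to the 3-point toss-and-catch of the logistic IFS, this invariant set contains no bridging point. -/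
/-!
The nonzero fixed point of `f_γ` is `1 - 1/γ`, which for `γ = (1+μ²)/μ` is exactly `c`.
Since `a < 1/2 ≤ b` whenever `μ > 1`, the tent map acts by `a ↦ μa = b` and
`b ↦ μ(1 - b) = a`, so `{a, b}` is a genuine 2-cycle of `T_μ`.
-/

theorem logistic_one_sub_inv {γ : ℝ} (hγ : γ ≠ 0) : logistic γ (1 - γ⁻¹) = 1 - γ⁻¹ := by
  rw [logistic]
  field_simp
  ring

section TentTwoCycle

variable {μ : ℝ}

theorem div_one_add_sq_lt_half (hμ : μ ≠ 1) : μ / (1 + μ ^ 2) < 1 / 2 := by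
  have hpos : (0 : ℝ) < (μ - 1) ^ 2 := by positivity [sub_ne_zero.mpr hμ]
  rw [div_lt_iff₀ (by positivity)]
  nlinarith

theorem half_le_sq_div_one_add_sq (hμ : 1 ≤ μ ^ 2) : 1 / 2 ≤ μ ^ 2 / (1 + μ ^ 2) := by
  rw [le_div_iff₀ (by positivity)]
  linarith

theorem tent_div_one_add_sq (hμ : μ ≠ 1) :
    tent μ (μ / (1 + μ ^ 2)) = μ ^ 2 / (1 + μ ^ 2) := by
  rw [tent, if_pos (div_one_add_sq_lt_half hμ)]
  ring

theorem tent_sq_div_one_add_sq (hμ : 1 ≤ μ ^ 2) :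
    tent μ (μ ^ 2 / (1 + μ ^ 2)) = μ / (1 + μ ^ 2) := by
  have hD : (1 : ℝ) + μ ^ 2 ≠ 0 := by positivity
  rw [tent, if_neg (half_le_sq_div_one_add_sq hμ).not_gt]
  field_simp
  ring

theorem div_one_add_sq_ne_sq_div (hμ0 : μ ≠ 0) (hμ1 : μ ≠ 1) :
    μ / (1 + μ ^ 2) ≠ μ ^ 2 / (1 + μ ^ 2) := by
  have hD : (1 : ℝ) + μ ^ 2 ≠ 0 := by positivity
  rw [Ne, div_left_inj' hD]
  intro h
  exact hμ1 (by simpa [sq, hμ0] using congrArg (· / μ) h.symm)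

end TentTwoCycle

theorem Function.isPeriodicPt_two_of_apply_eq {α : Type*} {f : α → α} {x y : α}
    (hxy : f x = y) (hyx : f y = x) : Function.IsPeriodicPt f 2 x := by
  simp [Function.IsPeriodicPt, Function.IsFixedPt, hxy, hyx]

theorem logistic_tent_IFS_three_point_no_bridging_general (μ γ : ℝ)
    (hμ1 : 1 < μ) (hγ : γ = (1 + μ ^ 2) / μ)
    (a b c : ℝ)
    (ha : a = μ / (1 + μ ^ 2)) (hb : b = μ ^ 2 / (1 + μ ^ 2))
    (hc : c = (1 + μ ^ 2 - μ) / (1 + μ ^ 2)) :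
    logistic γ c = c ∧
    tent μ (tent μ a) = a ∧ tent μ (tent μ b) = b ∧
    tent μ a ≠ a ∧ tent μ b ≠ b ∧
    ∀ x ∈ ({a, b, c} : Set ℝ),
      (∃ n : ℕ, 1 ≤ n ∧ (logistic γ)^[n] x = x) ∨
      (∃ n : ℕ, 1 ≤ n ∧ (tent μ)^[n] x = x) := by
  have hμ0 : μ ≠ 0 := by positivity
  have hc_eq : c = 1 - γ⁻¹ := by
    rw [hc, hγ, inv_div]
    field_simp
  have hlc : logistic γ c = c := hc_eq ▸ logistic_one_sub_inv (by rw [hγ]; positivity)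
  have hta : tent μ a = b := ha ▸ hb ▸ tent_div_one_add_sq hμ1.ne'
  have htb : tent μ b = a := ha ▸ hb ▸ tent_sq_div_one_add_sq (by nlinarith)
  have hab : a ≠ b := ha ▸ hb ▸ div_one_add_sq_ne_sq_div hμ0 hμ1.ne'
  refine ⟨hlc, by rw [hta, htb], by rw [htb, hta], hta ▸ hab.symm, htb ▸ hab, ?_⟩
  rintro x (rfl | rfl | rfl)
  · exact .inr ⟨2, one_le_two, Function.isPeriodicPt_two_of_apply_eq hta htb⟩
  · exact .inr ⟨2, one_le_two, Function.isPeriodicPt_two_of_apply_eq htb hta⟩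
  · exact .inl ⟨1, le_rfl, hlc⟩

/-- For `1 < μ ≤ 2` and `γ = (1+μ²)/μ`, every point of the 3-point invariant set
`Λ = {a, b, c}` of the logistic-tent IFS is a periodic point of `f_γ` or of `T_μ`:
`c` is a fixed point of `f_γ`, while `a` and `b` are period-2 points of `T_μ`.
Hence this invariant set contains no bridging point. -/
theorem logistic_tent_IFS_three_point_no_bridging (μ γ : ℝ)
    (hμ1 : 1 < μ) (hμ2 : μ ≤ 2) (hγ : γ = (1 + μ ^ 2) / μ)
    (a b c : ℝ)
    (ha : a = μ / (1 + μ ^ 2)) (hb : b = μ ^ 2 / (1 + μ ^ 2))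
    (hc : c = (1 + μ ^ 2 - μ) / (1 + μ ^ 2)) :
    logistic γ c = c ∧
    tent μ (tent μ a) = a ∧ tent μ (tent μ b) = b ∧
    tent μ a ≠ a ∧ tent μ b ≠ b ∧
    ∀ x ∈ ({a, b, c} : Set ℝ),
      (∃ n : ℕ, 1 ≤ n ∧ (logistic γ)^[n] x = x) ∨
      (∃ n : ℕ, 1 ≤ n ∧ (tent μ)^[n] x = x) :=
  logistic_tent_IFS_three_point_no_bridging_general μ γ hμ1 hγ a b c ha hb hc
end
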